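/- arXiv:2308.13991 — 4 statements merged into one kernel-verified Lean document; each statement's English description precedes it below -/
import Mathlib

section
/- Let p be a positive natural number and let μ_p be the product measure on (Fin p → ℝ) in which each coordinate is an independent standard Gaussian N(0,1). Then for every ε with 0 < ε < 1, μ_p { x | Σ_{j<p} (x j)² ≥ (1 + ε)·p } ≤ ((1 + ε)·exp(−ε))^{p/2}. -/
open MeasureTheory ProbabilityTheory ENNReal

lemma lintegral_pi_pow {n : ℕ} {μ : Measure ℝ} [SigmaFinite μ] {f : ℝ → ℝ≥0∞}
    (hf : Measurable f) :
    ∫⁻ x : Fin n → ℝ, ∏ i, f (x i) ∂(Measure.pi fun _ : Fin n => μ) = (∫⁻ x, f x ∂μ) ^ n := by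
  induction n with
  | zero => simp
  | succ n ih =>
    rw [← ((measurePreserving_piFinSuccAbove (fun _ : Fin (n+1) => μ) 0).symm).lintegral_comp_emb
      (MeasurableEquiv.measurableEmbedding _)]
    simp only [MeasurableEquiv.piFinSuccAbove_symm_apply, Fin.insertNthEquiv, Equiv.coe_fn_mk,
      Fin.insertNth_zero, Fin.prod_univ_succ, Fin.cons_zero, Fin.cons_succ, Fin.zero_succAbove, cast_eq]
    rw [lintegral_prod_mul (f := f) (g := fun y : Fin n → ℝ => ∏ i, f (y i)) hf.aemeasurable (Finset.aemeasurable_fun_prod _ fun i _ => hf.comp (measurable_pi_apply i) |>.aemeasurable), ih, pow_succ, mul_comm]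

lemma gauss_sq_lintegral {t : ℝ} (ht0 : 0 ≤ t) (ht : t < 1/2) :
    ∫⁻ x, ENNReal.ofReal (Real.exp (t * x ^ 2)) ∂(gaussianReal 0 1)
      = ENNReal.ofReal ((Real.sqrt (2 * Real.pi))⁻¹ * Real.sqrt (Real.pi / (1/2 - t))) := by
  have hb : 0 < 1/2 - t := by linarith
  rw [gaussianReal_of_var_ne_zero 0 one_ne_zero,
    lintegral_withDensity_eq_lintegral_mul _ (measurable_gaussianPDF 0 1) (by fun_prop)]
  have heq : ∀ x : ℝ, (gaussianPDF 0 1 x * ENNReal.ofReal (Real.exp (t * x ^ 2)))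
      = ENNReal.ofReal ((Real.sqrt (2 * Real.pi))⁻¹ * Real.exp (-(1/2 - t) * x ^ 2)) := by
    intro x
    rw [gaussianPDF, ← ENNReal.ofReal_mul (gaussianPDFReal_nonneg 0 1 x)]
    congr 1
    simp only [gaussianPDFReal, NNReal.coe_one, mul_one, sub_zero]
    rw [mul_assoc, ← Real.exp_add]
    ring_nf
  simp only [Pi.mul_apply, heq]
  rw [← ofReal_integral_eq_lintegral_ofReal
    (((integrable_exp_neg_mul_sq hb).const_mul _))
    (Filter.Eventually.of_forall fun x => by positivity)]
  rw [integral_const_mul, integral_gaussian]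

/-- Upper-tail bound for a chi-squared-type sum: if `μ_p` is the product of
`p` iid standard Gaussians on `Fin p → ℝ` and `0 < ε < 1`, then
`μ_p {x | Σ_j (x j)² ≥ (1+ε) p} ≤ ((1+ε) exp (-ε))^(p/2)`. -/
theorem stmt8 (p : ℕ) (hp : 0 < p) (ε : ℝ) (hε0 : 0 < ε) (hε1 : ε < 1) :
    (Measure.pi fun _ : Fin p => gaussianReal 0 1)
        {x : Fin p → ℝ | (1 + ε) * p ≤ ∑ j : Fin p, (x j) ^ 2}
      ≤ ENNReal.ofReal (((1 + ε) * Real.exp (-ε)) ^ ((p : ℝ) / 2)) := by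
  have h1ε : (0:ℝ) < 1 + ε := by linarith
  set t : ℝ := ε / (2 * (1 + ε)) with ht_def
  have ht0 : 0 ≤ t := by positivity
  have htlt : t < 1/2 := by
    rw [ht_def, div_lt_iff₀ (by linarith)]
    nlinarith
  set μp := Measure.pi fun _ : Fin p => gaussianReal 0 1 with hμp
  set f : (Fin p → ℝ) → ℝ≥0∞ := fun x => ENNReal.ofReal (Real.exp (t * ∑ j, (x j)^2)) with hf_def
  have hmeas : Measurable f := by
    apply ENNReal.measurable_ofReal.comp
    apply Real.measurable_exp.comp
    exact (Finset.measurable_sum _ fun j _ => (measurable_pi_apply j).pow_const 2).const_mul t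
  have hsubset : {x : Fin p → ℝ | (1+ε)*p ≤ ∑ j, (x j)^2}
      ⊆ {x | ENNReal.ofReal (Real.exp (t * ((1+ε)*p))) ≤ f x} := by
    intro x hx
    exact ENNReal.ofReal_le_ofReal (Real.exp_le_exp.2 (mul_le_mul_of_nonneg_left hx ht0))
  have h2 : ENNReal.ofReal (Real.exp (t * ((1+ε)*p))) * μp {x | (1+ε)*p ≤ ∑ j, (x j)^2}
      ≤ ∫⁻ x, f x ∂μp :=
    le_trans (mul_le_mul_right (measure_mono hsubset) _)
      (mul_meas_ge_le_lintegral₀ hmeas.aemeasurable _)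
  have h3 : ∫⁻ x, f x ∂μp
      = (ENNReal.ofReal ((Real.sqrt (2 * Real.pi))⁻¹ * Real.sqrt (Real.pi / (1/2 - t)))) ^ p := by
    have hfp : f = fun x : Fin p → ℝ => ∏ j, ENNReal.ofReal (Real.exp (t * (x j)^2)) := by
      funext x
      show ENNReal.ofReal (Real.exp (t * ∑ j, (x j)^2)) = _
      rw [Finset.mul_sum, Real.exp_sum, ← ENNReal.ofReal_prod_of_nonneg]
      intro i _
      positivity
    rw [hfp, hμp, lintegral_pi_pow (f := fun y : ℝ => ENNReal.ofReal (Real.exp (t * y ^ 2)))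
      (ENNReal.measurable_ofReal.comp (Real.measurable_exp.comp
        ((measurable_id.pow_const 2).const_mul t))), gauss_sq_lintegral ht0 htlt]
  have hc : (Real.sqrt (2 * Real.pi))⁻¹ * Real.sqrt (Real.pi / (1/2 - t)) = Real.sqrt (1+ε) := by
    have h12 : Real.pi / (1/2 - t) = (2 * Real.pi) * (1 + ε) := by
      rw [ht_def]
      field_simp
      ring
    have hsq : Real.sqrt (2 * Real.pi * (1 + ε)) = Real.sqrt (2 * Real.pi) * Real.sqrt (1 + ε) :=
      Real.sqrt_mul (by positivity) _
    rw [h12, hsq, inv_mul_cancel_left₀ (ne_of_gt (Real.sqrt_pos.2 (by positivity)))]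
  -- real-number identity for the bound
  have hreal : Real.sqrt (1+ε) ^ p / Real.exp (t * ((1+ε)*p))
      = ((1 + ε) * Real.exp (-ε)) ^ ((p : ℝ) / 2) := by
    have hta : t * ((1+ε)*p) = ε * ((p:ℝ)/2) := by
      rw [ht_def]; field_simp
    rw [hta, Real.mul_rpow (le_of_lt h1ε) (Real.exp_nonneg _), ← Real.exp_mul,
      Real.sqrt_eq_rpow, ← Real.rpow_natCast ((1+ε) ^ (1/2 : ℝ)) p, ← Real.rpow_mul (le_of_lt h1ε)]
    rw [div_eq_mul_inv, ← Real.exp_neg]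
    congr 1
    · congr 1; push_cast; ring
    · congr 1; ring
  -- assemble
  have hE0 : ENNReal.ofReal (Real.exp (t * ((1+ε)*p))) ≠ 0 := by
    simp [Real.exp_pos]
  have hEtop : ENNReal.ofReal (Real.exp (t * ((1+ε)*p))) ≠ ⊤ := ENNReal.ofReal_ne_top
  have h4 : μp {x : Fin p → ℝ | (1+ε)*p ≤ ∑ j, (x j)^2}
      ≤ (∫⁻ x, f x ∂μp) / ENNReal.ofReal (Real.exp (t * ((1+ε)*p))) := by
    rw [ENNReal.le_div_iff_mul_le (Or.inl hE0) (Or.inl hEtop), mul_comm]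
    exact h2
  refine h4.trans (le_of_eq ?_)
  rw [h3, hc, ← ENNReal.ofReal_pow (Real.sqrt_nonneg _),
    ← ENNReal.ofReal_div_of_pos (Real.exp_pos _), hreal]
end

section
/- Let p be a positive natural number and let μ_p be the product measure on (Fin p → ℝ) in which each coordinate is an independent standard Gaussian N(0,1). Then for every ε with 0 < ε < 1, μ_p { x | Σ_{j<p} (x j)² ≤ (1 − ε)·p } ≤ exp(−ε²·p/4). -/
open MeasureTheory ProbabilityTheory Real
open scoped NNReal ENNReal

lemma key_exp_le {ε : ℝ} (h0 : 0 ≤ ε) (h1 : ε ≤ 1) : rexp (ε - ε ^ 2 / 2) ≤ 1 + ε := by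
  have h2 : rexp ε ≤ 1 + ε + ε ^ 2 / 2 + ε ^ 3 * (2 / 9) := by
    have h := Real.exp_bound' h0 h1 (n := 3) (by norm_num)
    simp [Finset.sum_range_succ, Nat.factorial] at h
    nlinarith [h]
  have h3 : 1 + ε ^ 2 / 2 ≤ rexp (ε ^ 2 / 2) := by
    have := Real.add_one_le_exp (ε ^ 2 / 2); linarith
  have h4 : rexp ε ≤ (1 + ε) * rexp (ε ^ 2 / 2) := by
    calc rexp ε ≤ 1 + ε + ε ^ 2 / 2 + ε ^ 3 * (2 / 9) := h2
    _ ≤ (1 + ε) * (1 + ε ^ 2 / 2) := by nlinarith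
    _ ≤ (1 + ε) * rexp (ε ^ 2 / 2) := by nlinarith [h3]
  rw [Real.exp_sub, div_le_iff₀ (Real.exp_pos _)]
  linarith [h4]

lemma gauss_exp_int {c : ℝ} (hc : 0 < c) :
    ∫ x, rexp (-c * x ^ 2) ∂(gaussianReal 0 1) = (Real.sqrt (1 + 2 * c))⁻¹ := by
  rw [gaussianReal_of_var_ne_zero 0 one_ne_zero]
  have hmeas : Measurable fun x : ℝ => (gaussianPDFReal 0 1 x).toNNReal :=
    (measurable_gaussianPDFReal 0 1).real_toNNReal
  have hd : (gaussianPDF 0 1) = fun x => ((gaussianPDFReal 0 1 x).toNNReal : ENNReal) := rfl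
  rw [hd, integral_withDensity_eq_integral_smul hmeas]
  have heq : ∀ x : ℝ, ((gaussianPDFReal 0 1 x).toNNReal : ℝ≥0) • rexp (-c * x ^ 2)
      = (Real.sqrt (2 * π))⁻¹ * rexp (-(c + 1/2) * x ^ 2) := by
    intro x
    rw [NNReal.smul_def, Real.coe_toNNReal _ (gaussianPDFReal_nonneg 0 1 x)]
    unfold gaussianPDFReal
    simp only [NNReal.coe_one, mul_one, sub_zero, smul_eq_mul]
    rw [mul_assoc, ← Real.exp_add]
    congr 2
    ring
  simp_rw [heq]
  rw [integral_const_mul, integral_gaussian]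
  rw [← Real.sqrt_inv, ← Real.sqrt_mul (by positivity), ← Real.sqrt_inv]
  congr 1
  have hπ : (0:ℝ) < π := Real.pi_pos
  field_simp
  ring

lemma gauss_exp_integrable {c : ℝ} (hc : 0 < c) :
    Integrable (fun x : ℝ => rexp (-c * x ^ 2)) (gaussianReal 0 1) := by
  refine Integrable.mono' (integrable_const 1) ?_ ?_
  · exact ((measurable_const.mul (measurable_id.pow_const 2)).exp).aestronglyMeasurable
  · refine Filter.Eventually.of_forall fun x => ?_
    rw [Real.norm_eq_abs, abs_of_pos (Real.exp_pos _)]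
    exact Real.exp_le_one_iff.mpr (by nlinarith [sq_nonneg x])

/-- Lower-tail bound: if `μ_p` is the product of `p` iid standard Gaussians
on `Fin p → ℝ` and `0 < ε < 1`, then
`μ_p {x | Σ_j (x j)² ≤ (1-ε) p} ≤ exp (-ε² p / 4)`. -/
theorem stmt11 (p : ℕ) (hp : 0 < p) (ε : ℝ) (hε0 : 0 < ε) (hε1 : ε < 1) :
    (Measure.pi fun _ : Fin p => gaussianReal 0 1)
        {x : Fin p → ℝ | ∑ j : Fin p, (x j) ^ 2 ≤ (1 - ε) * p}
      ≤ ENNReal.ofReal (Real.exp (-ε ^ 2 * p / 4)) := by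
  letI : MeasureSpace ℝ := ⟨gaussianReal 0 1⟩
  haveI : IsProbabilityMeasure (volume : Measure ℝ) :=
    inferInstanceAs (IsProbabilityMeasure (gaussianReal 0 1))
  set μ : Measure (Fin p → ℝ) := Measure.pi fun _ : Fin p => gaussianReal 0 1 with hμ
  have hμvol : μ = (volume : Measure (Fin p → ℝ)) := rfl
  haveI : IsProbabilityMeasure μ := by
    rw [hμ]; infer_instance
  set t : ℝ := -(ε/2) with ht
  set X : (Fin p → ℝ) → ℝ := fun x => ∑ j, (x j) ^ 2 with hX
  have hexpand : (fun x : Fin p → ℝ => rexp (t * X x))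
      = fun x => ∏ j, rexp (t * (x j) ^ 2) := by
    funext x
    rw [hX, Finset.mul_sum, Real.exp_sum]
  have hint1 : Integrable (fun y : ℝ => rexp (t * y ^ 2)) (volume : Measure ℝ) := by
    have := gauss_exp_integrable (c := ε/2) (by linarith)
    simp only [ht, neg_mul] at this ⊢; exact this
  have h_int : Integrable (fun x => rexp (t * X x)) μ := by
    rw [hexpand, hμvol]
    exact Integrable.fintype_prod (f := fun _ : Fin p => fun y : ℝ => rexp (t * y ^ 2))
      (fun _ => hint1)
  have hmgf : mgf X μ t = ((Real.sqrt (1 + ε))⁻¹) ^ p := by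
    rw [mgf, hμvol]
    calc ∫ x, rexp (t * X x) = ∫ x : Fin p → ℝ, ∏ j, rexp (t * (x j) ^ 2) := by
          rw [hexpand]
      _ = (∫ y : ℝ, rexp (t * y ^ 2)) ^ (Fintype.card (Fin p)) :=
          integral_fintype_prod_eq_pow (ι := Fin p) (fun y : ℝ => rexp (t * y ^ 2))
      _ = ((Real.sqrt (1 + ε))⁻¹) ^ p := by
          have h := gauss_exp_int (c := ε/2) (by linarith)
          have h2 : (fun y : ℝ => rexp (t * y ^ 2)) = fun y => rexp (-(ε/2) * y ^ 2) := by
            funext y; rw [ht]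
          rw [Fintype.card_fin, h2]
          rw [show (∫ y : ℝ, rexp (-(ε/2) * y ^ 2)) = ∫ y, rexp (-(ε/2) * y ^ 2) ∂(gaussianReal 0 1) from rfl, h, show 1 + 2 * (ε/2) = 1 + ε from by ring]
  have hch := measure_le_le_exp_mul_mgf (μ := μ) (X := X) (t := t)
    ((1 - ε) * p) (by rw [ht]; linarith) h_int
  -- final real-number bound
  have hs : (0:ℝ) < Real.sqrt (1 + ε) := Real.sqrt_pos.mpr (by linarith)
  have hbase : rexp (ε/2 * (1 - ε)) * (Real.sqrt (1 + ε))⁻¹ ≤ rexp (-ε^2/4) := by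
    have hsq : rexp (ε/2 * (1 - ε) + ε^2/4) ≤ Real.sqrt (1 + ε) := by
      rw [Real.le_sqrt (Real.exp_nonneg _) (by linarith : (0:ℝ) ≤ 1 + ε)]
      have : (rexp (ε/2 * (1 - ε) + ε^2/4)) ^ 2 = rexp (ε - ε^2/2) := by
        rw [← Real.exp_nat_mul]
        congr 1
        push_cast
        ring
      rw [this]
      exact key_exp_le hε0.le hε1.le
    have hinv : (Real.sqrt (1 + ε))⁻¹ ≤ (rexp (ε/2 * (1 - ε) + ε^2/4))⁻¹ :=
      inv_anti₀ (Real.exp_pos _) hsq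
    calc rexp (ε/2 * (1 - ε)) * (Real.sqrt (1 + ε))⁻¹
        ≤ rexp (ε/2 * (1 - ε)) * (rexp (ε/2 * (1 - ε) + ε^2/4))⁻¹ := by
          exact mul_le_mul_of_nonneg_left hinv (Real.exp_nonneg _)
      _ = rexp (-ε^2/4) := by
          rw [← Real.exp_neg, ← Real.exp_add]
          congr 1
          ring
  have hfinal : rexp (-t * ((1 - ε) * p)) * mgf X μ t ≤ rexp (-ε ^ 2 * p / 4) := by
    rw [hmgf, ht]
    have e1 : -(-(ε/2)) * ((1 - ε) * (p:ℝ)) = (p:ℝ) * (ε/2 * (1 - ε)) := by ring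
    have e2 : -ε ^ 2 * (p:ℝ) / 4 = (p:ℝ) * (-ε^2/4) := by ring
    rw [e1, e2, Real.exp_nat_mul, Real.exp_nat_mul, ← mul_pow]
    exact pow_le_pow_left₀ (by positivity) hbase p
  have hne : μ {x : Fin p → ℝ | X x ≤ (1 - ε) * p} ≠ ⊤ := measure_ne_top _ _
  calc μ {x : Fin p → ℝ | ∑ j : Fin p, (x j) ^ 2 ≤ (1 - ε) * p}
      = ENNReal.ofReal ((μ {x : Fin p → ℝ | X x ≤ (1 - ε) * p}).toReal) := by
        rw [ENNReal.ofReal_toReal hne]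
    _ ≤ ENNReal.ofReal (rexp (-ε ^ 2 * p / 4)) :=
        ENNReal.ofReal_le_ofReal (hch.trans hfinal)
end

section
/- Let p be a positive natural number and let μ_p be the product measure on (Fin p → ℝ) in which each coordinate is an independent standard Gaussian N(0,1). Then for every ε with 0 < ε < 1, μ_p { x | Σ_{j<p} (x j)² ≥ (1 + ε)·p } ≤ exp(−(3ε² − 2ε³)·p/12). -/
open MeasureTheory ProbabilityTheory Real
open scoped NNReal ENNReal

lemma log_cubic {x : ℝ} (hx : 0 ≤ x) : Real.log (1 + x) ≤ x - x ^ 2 / 2 + x ^ 3 / 3 := by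
  set f : ℝ → ℝ := fun y => y - y ^ 2 / 2 + y ^ 3 / 3 - Real.log (1 + y) with hf
  have hderiv : ∀ y : ℝ, 0 ≤ y → HasDerivAt f (1 - y + y ^ 2 - 1 / (1 + y)) y := by
    intro y hy
    have h1 : (0:ℝ) < 1 + y := by linarith
    have hlog : HasDerivAt (fun z : ℝ => Real.log (1 + z)) (1 / (1 + y)) y := by
      have := ((hasDerivAt_id y).const_add 1).log h1.ne'
      simpa using this
    have hpoly : HasDerivAt (fun z : ℝ => z - z ^ 2 / 2 + z ^ 3 / 3)
        (1 - y + y ^ 2) y := by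
      have h2 : HasDerivAt (fun z : ℝ => z ^ 2 / 2) y y := by
        have := (hasDerivAt_pow 2 y).div_const 2
        norm_num at this
        convert this using 1
      have h3 : HasDerivAt (fun z : ℝ => z ^ 3 / 3) (y ^ 2) y := by
        have := (hasDerivAt_pow 3 y).div_const 3
        norm_num at this
        convert this using 1
      simpa [Pi.add_def, Pi.sub_def] using ((hasDerivAt_id y).sub h2).add h3
    simpa [Pi.sub_def] using hpoly.sub hlog
  have hmono : MonotoneOn f (Set.Ici (0:ℝ)) := by
    apply monotoneOn_of_deriv_nonneg (convex_Ici 0)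
    · intro y hy
      exact (hderiv y hy).continuousAt.continuousWithinAt
    · intro y hy
      rw [interior_Ici] at hy
      exact (hderiv y (le_of_lt hy)).differentiableAt.differentiableWithinAt
    · intro y hy
      rw [interior_Ici] at hy
      rw [(hderiv y hy.le).deriv]
      have hy' : (0:ℝ) < y := hy
      have h1 : (0:ℝ) < 1 + y := by linarith
      rw [sub_nonneg, div_le_iff₀ h1]
      nlinarith
  have h0 : f 0 = 0 := by simp [hf]
  have := hmono (Set.self_mem_Ici) (Set.mem_Ici.mpr hx) hx
  rw [h0] at this
  simp only [hf] at this
  linarith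

lemma pdf_smul_eq {t : ℝ} (x : ℝ) :
    (ProbabilityTheory.gaussianPDFReal 0 1 x).toNNReal • Real.exp (t * x ^ 2)
      = (√(2 * π))⁻¹ * Real.exp (-(1/2 - t) * x ^ 2) := by
  rw [NNReal.smul_def, Real.coe_toNNReal _ (gaussianPDFReal_nonneg 0 1 x), smul_eq_mul]
  simp only [gaussianPDFReal, NNReal.coe_one, mul_one, sub_zero]
  rw [mul_assoc, ← Real.exp_add]
  congr 1
  ring

lemma integrable_exp_sq_gaussian {t : ℝ} (ht : t < 1/2) :
    Integrable (fun x : ℝ => Real.exp (t * x ^ 2)) (gaussianReal 0 1) := by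
  rw [gaussianReal_of_var_ne_zero 0 one_ne_zero]
  have hpdf : (ProbabilityTheory.gaussianPDF 0 1)
      = fun x => (((ProbabilityTheory.gaussianPDFReal 0 1 x).toNNReal : ℝ≥0) : ℝ≥0∞) := rfl
  rw [hpdf, integrable_withDensity_iff_integrable_smul
    (ProbabilityTheory.measurable_gaussianPDFReal 0 1).real_toNNReal]
  have : (fun x : ℝ => (ProbabilityTheory.gaussianPDFReal 0 1 x).toNNReal
      • Real.exp (t * x ^ 2))
      = fun x => (√(2 * π))⁻¹ * Real.exp (-(1/2 - t) * x ^ 2) := by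
    funext x; exact pdf_smul_eq x
  rw [this]
  exact (integrable_exp_neg_mul_sq (by linarith)).const_mul _

lemma integral_exp_sq_gaussian {t : ℝ} (ht : t < 1/2) :
    ∫ x, Real.exp (t * x ^ 2) ∂(gaussianReal 0 1) = (√(1 - 2 * t))⁻¹ := by
  rw [gaussianReal_of_var_ne_zero 0 one_ne_zero]
  have hpdf : (ProbabilityTheory.gaussianPDF 0 1)
      = fun x => (((ProbabilityTheory.gaussianPDFReal 0 1 x).toNNReal : ℝ≥0) : ℝ≥0∞) := rfl
  rw [hpdf, integral_withDensity_eq_integral_smul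
    (ProbabilityTheory.measurable_gaussianPDFReal 0 1).real_toNNReal]
  simp_rw [pdf_smul_eq]
  rw [integral_const_mul, integral_gaussian]
  have h1 : (0:ℝ) < 1 - 2 * t := by linarith
  have h2 : (0:ℝ) < 2 * π := by positivity
  rw [show π / (1/2 - t) = 2 * π / (1 - 2 * t) by rw [div_eq_div_iff] <;> [ring; linarith; linarith]]
  rw [Real.sqrt_div h2.le]
  have h3 : √(2 * π) ≠ 0 := by positivity
  field_simp


lemma pi_integral_pow (p : ℕ) (f : ℝ → ℝ) :
    ∫ x : Fin p → ℝ, ∏ j : Fin p, f (x j)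
        ∂(Measure.pi fun _ : Fin p => gaussianReal 0 1)
      = (∫ x, f x ∂(gaussianReal 0 1)) ^ p := by
  letI : MeasureSpace ℝ := ⟨gaussianReal 0 1⟩
  haveI : SigmaFinite (volume : Measure ℝ) :=
    (inferInstance : SigmaFinite (gaussianReal 0 1))
  have := MeasureTheory.integral_fintype_prod_eq_pow (𝕜 := ℝ) (ι := Fin p) f (μ := gaussianReal 0 1)
  simpa [Fintype.card_fin] using this

lemma pi_integrable (p : ℕ) (f : ℝ → ℝ) (hf : Integrable f (gaussianReal 0 1)) :
    Integrable (fun x : Fin p → ℝ => ∏ j : Fin p, f (x j))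
      (Measure.pi fun _ : Fin p => gaussianReal 0 1) := by
  letI : MeasureSpace ℝ := ⟨gaussianReal 0 1⟩
  haveI : SigmaFinite (volume : Measure ℝ) :=
    (inferInstance : SigmaFinite (gaussianReal 0 1))
  exact MeasureTheory.Integrable.fin_nat_prod (𝕜 := ℝ) (fun _ => hf)

/-- Upper-tail bound: if `μ_p` is the product of `p` iid standard Gaussians
on `Fin p → ℝ` and `0 < ε < 1`, then
`μ_p {x | Σ_j (x j)² ≥ (1+ε) p} ≤ exp (-(3ε² - 2ε³) p / 12)`. -/
theorem stmt12 (p : ℕ) (hp : 0 < p) (ε : ℝ) (hε0 : 0 < ε) (hε1 : ε < 1) :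
    (Measure.pi fun _ : Fin p => gaussianReal 0 1)
        {x : Fin p → ℝ | (1 + ε) * p ≤ ∑ j : Fin p, (x j) ^ 2}
      ≤ ENNReal.ofReal (Real.exp (-(3 * ε ^ 2 - 2 * ε ^ 3) * p / 12)) := by
  set μ := Measure.pi fun _ : Fin p => gaussianReal 0 1 with hμ
  have h1ε : (0:ℝ) < 1 + ε := by linarith
  set t : ℝ := ε / (2 * (1 + ε)) with htdef
  have ht0 : 0 < t := by positivity
  have hthalf : t < 1/2 := by
    rw [htdef, div_lt_iff₀ (by positivity)]
    linarith
  have hint1 : Integrable (fun x : ℝ => Real.exp (t * x ^ 2)) (gaussianReal 0 1) :=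
    integrable_exp_sq_gaussian hthalf
  set X : (Fin p → ℝ) → ℝ := fun x => ∑ j : Fin p, (x j) ^ 2 with hX
  have hexp_eq : (fun x : Fin p → ℝ => Real.exp (t * X x))
      = fun x => ∏ j : Fin p, Real.exp (t * (x j) ^ 2) := by
    funext x
    rw [hX, Finset.mul_sum, Real.exp_sum]
  have hint : Integrable (fun x => Real.exp (t * X x)) μ := by
    rw [hexp_eq, hμ]
    exact pi_integrable p _ hint1
  haveI : IsProbabilityMeasure μ := by rw [hμ]; infer_instance
  have chern := ProbabilityTheory.measure_ge_le_exp_mul_mgf (μ := μ) (X := X)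
      ((1 + ε) * p) ht0.le hint
  have hmgf : mgf X μ t = (√(1 + ε)) ^ p := by
    calc mgf X μ t = ∫ x, Real.exp (t * X x) ∂μ := rfl
    _ = ∫ x, ∏ j : Fin p, Real.exp (t * (x j) ^ 2) ∂μ := by rw [hexp_eq]
    _ = (∫ x, Real.exp (t * x ^ 2) ∂(gaussianReal 0 1)) ^ p := by
        rw [hμ]; exact pi_integral_pow p (fun y => Real.exp (t * y ^ 2))
    _ = ((√(1 - 2 * t))⁻¹) ^ p := by rw [integral_exp_sq_gaussian hthalf]
    _ = (√(1 + ε)) ^ p := by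
        have h2t : 1 - 2 * t = (1 + ε)⁻¹ := by
          rw [htdef]; field_simp
          ring
        rw [h2t, Real.sqrt_inv, inv_inv]
  have hsq : Real.exp (Real.log (1 + ε) / 2) ^ 2 = 1 + ε := by
    rw [← Real.exp_nat_mul,
      show ((2:ℕ):ℝ) * (Real.log (1 + ε) / 2) = Real.log (1 + ε) by push_cast; ring,
      Real.exp_log h1ε]
  have hsqrt : √(1 + ε) = Real.exp (Real.log (1 + ε) / 2) := by
    conv_lhs => rw [← hsq]
    rw [Real.sqrt_sq (Real.exp_nonneg _)]
  have hpow : (√(1 + ε)) ^ p = Real.exp (p * (Real.log (1 + ε) / 2)) := by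
    rw [hsqrt, ← Real.exp_nat_mul]
  have hfinal : Real.exp (-t * ((1 + ε) * p)) * mgf X μ t
      ≤ Real.exp (-(3 * ε ^ 2 - 2 * ε ^ 3) * p / 12) := by
    rw [hmgf, hpow, ← Real.exp_add]
    apply Real.exp_le_exp.mpr
    have hlog : Real.log (1 + ε) ≤ ε - ε ^ 2 / 2 + ε ^ 3 / 3 := log_cubic hε0.le
    have hte : t * (1 + ε) = ε / 2 := by
      rw [htdef]; field_simp
    have hp0 : (0:ℝ) ≤ p := Nat.cast_nonneg p
    have h1 : -t * ((1 + ε) * (p:ℝ)) = -(ε / 2) * p := by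
      rw [show -t * ((1 + ε) * (p:ℝ)) = -(t * (1 + ε)) * p by ring, hte]
    rw [h1]
    nlinarith [mul_le_mul_of_nonneg_left hlog hp0]
  have hne : μ {x : Fin p → ℝ | (1 + ε) * p ≤ X x} ≠ ⊤ := measure_ne_top μ _
  calc μ {x : Fin p → ℝ | (1 + ε) * p ≤ X x}
      = ENNReal.ofReal ((μ {x : Fin p → ℝ | (1 + ε) * p ≤ X x}).toReal) :=
        (ENNReal.ofReal_toReal hne).symm
    _ ≤ ENNReal.ofReal (Real.exp (-t * ((1 + ε) * p)) * mgf X μ t) :=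
        ENNReal.ofReal_le_ofReal chern
    _ ≤ ENNReal.ofReal (Real.exp (-(3 * ε ^ 2 - 2 * ε ^ 3) * p / 12)) :=
        ENNReal.ofReal_le_ofReal hfinal
end

section
/- Let d and p be positive natural numbers, let ν be the product measure on matrices R ∈ (Fin p → Fin d → ℝ) in which every entry R i j is an independent standard Gaussian N(0,1), and fix a nonzero vector y ∈ ℝ^d. For a matrix R define z(R) := (1/√p)·(R·y) ∈ ℝ^p. Then for every ε with 0 < ε < 1, ν { R | | ‖z(R)‖² − ‖y‖² | > ε·‖y‖² } ≤ 2·exp(−(3ε² − 2ε³)·p/12). -/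
/-!
The rows `Rᵢ` of `R` are independent standard Gaussian vectors, so the coordinates `⟪Rᵢ, y⟫` of
`R y` are i.i.d. `N(0, ‖y‖²)` and `p ‖z(R)‖² = ∑ᵢ ⟪Rᵢ, y⟫²` is `‖y‖²` times a `χ²(p)` variable,
with moment generating function `(1 - 2t‖y‖²)^(-p/2)`. The Chernoff bound at the optimal `t`
bounds the tail at `(1 + x) p ‖y‖²` by `((1 + x) e^(-x))^(p/2)`, for `x = ε` and `x = -ε`, and
`log (1 + x) ≤ x - x²/2 + x³/3` turns both into `exp (-(3ε² - 2ε³) p / 12)`.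
-/

open MeasureTheory ProbabilityTheory Matrix Real
open scoped ENNReal NNReal

lemma map_dotProduct_pi_gaussianReal {ι : Type*} [Fintype ι] (y : EuclideanSpace ℝ ι) :
    (Measure.pi fun _ : ι => gaussianReal 0 1).map (· ⬝ᵥ y.ofLp) = gaussianReal 0 (‖y‖₊ ^ 2) := by
  have hcomp : (· ⬝ᵥ y.ofLp) = innerSL ℝ y ∘ WithLp.toLp 2 := by
    ext x
    simp [EuclideanSpace.inner_eq_star_dotProduct, dotProduct_comm]
  rw [hcomp, ← Measure.map_map (by fun_prop) (by fun_prop), map_pi_eq_stdGaussian,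
    IsGaussian.map_eq_gaussianReal, integral_strongDual_stdGaussian, variance_dual_stdGaussian,
    innerSL_apply_norm]
  congr
  ext
  simp

lemma lintegral_exp_mul_sq_gaussianReal {v : ℝ≥0} {t : ℝ} (ht : 2 * t * v < 1) :
    ∫⁻ x, ENNReal.ofReal (exp (t * x ^ 2)) ∂gaussianReal 0 v
      = ENNReal.ofReal (√(1 - 2 * t * v))⁻¹ := by
  rcases eq_or_ne v 0 with rfl | hv
  · simp [gaussianReal_zero_var]
  set b := (1 - 2 * t * v) / (2 * v) with hb_def
  have hb : 0 < b := div_pos (by linarith) (by positivity)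
  have hdensity : ∀ x, gaussianPDF 0 v x * ENNReal.ofReal (exp (t * x ^ 2))
      = ENNReal.ofReal ((√(2 * π * v))⁻¹ * exp (-b * x ^ 2)) := by
    intro x
    rw [gaussianPDF, ← ENNReal.ofReal_mul (gaussianPDFReal_nonneg _ _ _), gaussianPDFReal,
      mul_assoc, ← exp_add]
    congr 3
    rw [hb_def]
    field_simp
    ring
  rw [gaussianReal_of_var_ne_zero _ hv,
    lintegral_withDensity_eq_lintegral_mul _ (measurable_gaussianPDF _ _) (by fun_prop)]
  simp only [Pi.mul_apply, hdensity]
  rw [← ofReal_integral_eq_lintegral_ofReal ((integrable_exp_neg_mul_sq hb).const_mul _)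
    (Filter.Eventually.of_forall fun x => by positivity), integral_const_mul, integral_gaussian]
  congr 1
  rw [← sqrt_inv, ← sqrt_inv, ← sqrt_mul (by positivity)]
  congr 1
  rw [hb_def]
  field_simp

lemma lintegral_prod_pi_eq_pow {ι α : Type*} [Fintype ι] [MeasurableSpace α] (μ : Measure α)
    [IsProbabilityMeasure μ] {g : α → ℝ≥0∞} (hg : Measurable g) :
    ∫⁻ s : ι → α, ∏ i, g (s i) ∂Measure.pi (fun _ => μ) = (∫⁻ x, g x ∂μ) ^ Fintype.card ι := by
  refine (lintegral_prod_eq_prod_lintegral_of_indepFun _ (fun i (s : ι → α) => g (s i))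
    (iIndepFun_pi fun _ => hg.aemeasurable) fun i => hg.comp (measurable_pi_apply i)).trans ?_
  simp_rw [(measurePreserving_eval (fun _ : ι => μ) _).lintegral_comp hg]
  simp

lemma lintegral_exp_mul_sum_sq_pi {ι : Type*} [Fintype ι] (μ : Measure ℝ) [IsProbabilityMeasure μ]
    (t : ℝ) :
    ∫⁻ s : ι → ℝ, ENNReal.ofReal (exp (t * ∑ i, s i ^ 2)) ∂Measure.pi (fun _ => μ)
      = (∫⁻ x, ENNReal.ofReal (exp (t * x ^ 2)) ∂μ) ^ Fintype.card ι := by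
  simp_rw [Finset.mul_sum, exp_sum, ENNReal.ofReal_prod_of_nonneg fun _ _ => (exp_pos _).le]
  exact lintegral_prod_pi_eq_pow μ (g := fun x => ENNReal.ofReal (exp (t * x ^ 2))) (by fun_prop)

lemma measure_ge_le_exp_neg_mul_lintegral_exp {Ω : Type*} [MeasurableSpace Ω] {μ : Measure Ω}
    {Y : Ω → ℝ} (hY : AEMeasurable Y μ) (a : ℝ) :
    μ {ω | a ≤ Y ω} ≤ ENNReal.ofReal (exp (-a)) * ∫⁻ ω, ENNReal.ofReal (exp (Y ω)) ∂μ := by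
  have hsub : {ω | a ≤ Y ω} ⊆ {ω | ENNReal.ofReal (exp a) ≤ ENNReal.ofReal (exp (Y ω))} :=
    fun ω hω => ENNReal.ofReal_le_ofReal (exp_le_exp.mpr hω)
  have hmarkov := mul_meas_ge_le_lintegral₀
    (ENNReal.measurable_ofReal.comp_aemeasurable (measurable_exp.comp_aemeasurable hY))
    (ENNReal.ofReal (exp a))
  have hcancel : ENNReal.ofReal (exp (-a)) * ENNReal.ofReal (exp a) = 1 := by
    rw [← ENNReal.ofReal_mul (exp_pos _).le, ← exp_add, neg_add_cancel, exp_zero,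
      ENNReal.ofReal_one]
  calc μ {ω | a ≤ Y ω}
      ≤ ENNReal.ofReal (exp (-a)) * (ENNReal.ofReal (exp a) *
          μ {ω | ENNReal.ofReal (exp a) ≤ ENNReal.ofReal (exp (Y ω))}) := by
        rw [← mul_assoc, hcancel, one_mul]; exact measure_mono hsub
    _ ≤ _ := by gcongr; exact hmarkov

lemma one_add_mul_exp_neg_le (x : ℝ) : (1 + x) * exp (-x) ≤ exp (-(x ^ 2 / 2 - x ^ 3 / 3)) := by
  set F : ℝ → ℝ := fun y => (1 + y) * exp (-y + y ^ 2 / 2 - y ^ 3 / 3)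
  have hF : ∀ y, HasDerivAt F (-y ^ 3 * exp (-y + y ^ 2 / 2 - y ^ 3 / 3)) y := by
    intro y
    have hq : HasDerivAt (fun z : ℝ => -z + z ^ 2 / 2 - z ^ 3 / 3) (-1 + y - y ^ 2) y := by
      refine ((((hasDerivAt_id y).neg).add ((hasDerivAt_pow 2 y).div_const 2)).sub
        ((hasDerivAt_pow 3 y).div_const 3)).congr_deriv ?_
      norm_num
    refine (((hasDerivAt_id y).const_add 1).mul hq.exp).congr_deriv ?_
    simp only [id]
    ring
  have hFcont : Continuous F := by fun_prop
  have hFdiff : Differentiable ℝ F := fun y => (hF y).differentiableAt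
  have hF_le : F x ≤ F 0 := by
    rcases le_total 0 x with hx | hx
    · refine antitoneOn_of_deriv_nonpos (convex_Ici 0) hFcont.continuousOn
        hFdiff.differentiableOn (fun y hy => ?_) Set.self_mem_Ici hx hx
      rw [interior_Ici] at hy
      rw [(hF y).deriv]
      have : 0 < y ^ 3 := pow_pos hy 3
      nlinarith [exp_pos (-y + y ^ 2 / 2 - y ^ 3 / 3)]
    · refine monotoneOn_of_deriv_nonneg (convex_Iic 0) hFcont.continuousOn
        hFdiff.differentiableOn (fun y hy => ?_) hx Set.self_mem_Iic hx
      rw [interior_Iic] at hy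
      rw [(hF y).deriv]
      have : y ^ 3 < 0 := Odd.pow_neg (by decide) hy
      nlinarith [exp_pos (-y + y ^ 2 / 2 - y ^ 3 / 3)]
  have hF0 : F 0 = 1 := by simp [F]
  calc (1 + x) * exp (-x) = F x * exp (-(x ^ 2 / 2 - x ^ 3 / 3)) := by
        simp only [F, mul_assoc, ← exp_add]; ring_nf
    _ ≤ exp (-(x ^ 2 / 2 - x ^ 3 / 3)) := by
        rw [hF0] at hF_le
        exact mul_le_of_le_one_left (exp_pos _).le hF_le

-- For `x > 0` this is the upper tail `(1 + x) n v ≤ ∑ sᵢ²`, for `x < 0` the lower tail.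
lemma pi_gaussianReal_sum_sq_tail_le {ι : Type*} [Fintype ι] {v : ℝ≥0} (hv : 0 < v) {x : ℝ}
    (hx : -1 < x) :
    Measure.pi (fun _ : ι => gaussianReal 0 v)
        {s | x * ((1 + x) * (Fintype.card ι * v)) ≤ x * ∑ i, s i ^ 2}
      ≤ ENNReal.ofReal (exp (-(x ^ 2 / 2 - x ^ 3 / 3) * Fintype.card ι / 2)) := by
  set n : ℕ := Fintype.card ι
  have hx1 : 0 < 1 + x := by linarith
  -- the optimal Chernoff parameter for the threshold `(1 + x) n v`
  set θ := x / (2 * v * (1 + x)) with hθ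
  have hθv : 1 - 2 * θ * v = (1 + x)⁻¹ := by rw [hθ]; field_simp; ring
  have hsub : {s : ι → ℝ | x * ((1 + x) * (n * v)) ≤ x * ∑ i, s i ^ 2}
      ⊆ {s | x * n / 2 ≤ θ * ∑ i, s i ^ 2} := by
    intro s hs
    have hpos : 0 < 2 * v * (1 + x) := by positivity
    simp only [Set.mem_ofPred_eq, hθ] at hs ⊢
    rw [div_mul_eq_mul_div, le_div_iff₀ hpos]
    nlinarith
  have hmgf : ∫⁻ s, ENNReal.ofReal (exp (θ * ∑ i, s i ^ 2))
        ∂Measure.pi (fun _ : ι => gaussianReal 0 v) = ENNReal.ofReal (√(1 + x) ^ n) := by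
    rw [lintegral_exp_mul_sum_sq_pi,
      lintegral_exp_mul_sq_gaussianReal (by rw [← sub_pos, hθv]; positivity), hθv, sqrt_inv, inv_inv, ENNReal.ofReal_pow (sqrt_nonneg _)]
  refine (measure_mono hsub).trans ((measure_ge_le_exp_neg_mul_lintegral_exp
    (Measurable.aemeasurable (by fun_prop)) _).trans ?_)
  rw [hmgf, ← ENNReal.ofReal_mul (exp_pos _).le]
  refine ENNReal.ofReal_le_ofReal ?_
  have hexp_pow (a : ℝ) : exp (a * n / 2) = exp (a / 2) ^ n := by
    rw [← exp_nat_mul]; ring_nf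
  have hsqrt_exp (a : ℝ) : exp (a / 2) = √(exp a) := by
    rw [← sqrt_sq (exp_pos _).le, ← exp_nat_mul]; norm_num; ring_nf
  rw [show -(x * n / 2) = -x * n / 2 by ring, hexp_pow, hexp_pow, ← mul_pow]
  gcongr
  rw [hsqrt_exp, hsqrt_exp, ← sqrt_mul (exp_pos _).le, mul_comm]
  exact sqrt_le_sqrt (one_add_mul_exp_neg_le x)

lemma pi_gaussianReal_abs_sum_sq_sub_gt_le {ι : Type*} [Fintype ι] {v : ℝ≥0} (hv : 0 < v)
    {ε : ℝ} (hε0 : 0 < ε) (hε1 : ε < 1) :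
    Measure.pi (fun _ : ι => gaussianReal 0 v)
        {s | ε * (Fintype.card ι * v) < |∑ i, s i ^ 2 - Fintype.card ι * v|}
      ≤ ENNReal.ofReal (2 * exp (-(3 * ε ^ 2 - 2 * ε ^ 3) * Fintype.card ι / 12)) := by
  have hupper := pi_gaussianReal_sum_sq_tail_le (ι := ι) hv (x := ε) (by linarith)
  have hlower := pi_gaussianReal_sum_sq_tail_le (ι := ι) hv (x := -ε) (by linarith)
  set n : ℕ := Fintype.card ι
  have hsub : {s : ι → ℝ | ε * (n * v) < |∑ i, s i ^ 2 - n * v|}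
      ⊆ {s | ε * ((1 + ε) * (n * v)) ≤ ε * ∑ i, s i ^ 2}
        ∪ {s | -ε * ((1 + -ε) * (n * v)) ≤ -ε * ∑ i, s i ^ 2} := by
    intro s hs
    simp only [Set.mem_ofPred_eq, Set.mem_union] at hs ⊢
    rcases lt_abs.mp hs with h | h
    · left; nlinarith
    · right; nlinarith
  have hlower_exp : -((-ε) ^ 2 / 2 - (-ε) ^ 3 / 3) * n / 2 ≤ -(3 * ε ^ 2 - 2 * ε ^ 3) * n / 12 := by
    have : 0 ≤ ε ^ 3 * n := by positivity
    nlinarith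
  calc _ ≤ _ := measure_mono hsub
    _ ≤ _ := measure_union_le _ _
    _ ≤ _ := add_le_add hupper (hlower.trans (ENNReal.ofReal_le_ofReal (exp_le_exp.mpr hlower_exp)))
    _ = _ := by
      rw [← ENNReal.ofReal_add (exp_pos _).le (exp_pos _).le]
      congr 1
      ring_nf

lemma norm_one_div_sqrt_smul_sq (p : ℕ) (u : Fin p → ℝ) :
    ‖(WithLp.equiv 2 (Fin p → ℝ)).symm ((1 / √p) • u)‖ ^ 2 = (∑ i, u i ^ 2) / p := by
  rw [EuclideanSpace.real_norm_sq_eq, Finset.sum_div]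
  refine Finset.sum_congr rfl fun i _ => ?_
  simp [mul_pow, div_eq_inv_mul]

theorem stmt13_general (d p : ℕ) (hp : 0 < p)
    (y : EuclideanSpace ℝ (Fin d)) (hy : y ≠ 0)
    (ε : ℝ) (hε0 : 0 < ε) (hε1 : ε < 1) :
    (Measure.pi fun _ : Fin p => Measure.pi fun _ : Fin d => gaussianReal 0 1)
        {R : Fin p → Fin d → ℝ |
          |‖(WithLp.equiv 2 (Fin p → ℝ)).symm
                ((1 / Real.sqrt p) •
                  ((Matrix.of R) *ᵥ (WithLp.equiv 2 (Fin d → ℝ)) y))‖ ^ 2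
              - ‖y‖ ^ 2| > ε * ‖y‖ ^ 2}
      ≤ ENNReal.ofReal (2 * Real.exp (-(3 * ε ^ 2 - 2 * ε ^ 3) * p / 12)) := by
  have hp0 : (0 : ℝ) < p := by exact_mod_cast hp
  have hrows : (Measure.pi fun _ : Fin p => Measure.pi fun _ : Fin d => gaussianReal 0 1).map
        (fun R i => R i ⬝ᵥ y.ofLp)
      = Measure.pi fun _ : Fin p => gaussianReal 0 (‖y‖₊ ^ 2) := by
    rw [Measure.pi_map_pi (f := fun _ x => x ⬝ᵥ y.ofLp)
      fun _ => Measurable.aemeasurable (by fun_prop)]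
    simp_rw [map_dotProduct_pi_gaussianReal]
  have hdev := pi_gaussianReal_abs_sum_sq_sub_gt_le (ι := Fin p)
    (pow_pos (nnnorm_pos.mpr hy) 2) hε0 hε1
  rw [← hrows, Measure.map_apply (by fun_prop) (measurableSet_lt (by fun_prop) (by fun_prop))]
    at hdev
  simp only [Fintype.card_fin, NNReal.coe_pow, coe_nnnorm] at hdev
  convert hdev using 2
  ext R
  simp only [Set.mem_ofPred_eq, Set.mem_preimage, norm_one_div_sqrt_smul_sq, gt_iff_lt]
  rw [show ∀ a : ℝ, a / p - ‖y‖ ^ 2 = (a - p * ‖y‖ ^ 2) / p from fun a => by field_simp,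
    abs_div, abs_of_pos hp0, lt_div_iff₀ hp0, mul_assoc, mul_comm (‖y‖ ^ 2)]
  rfl

/-- Norm-preservation bound for a random Gaussian projection: if `ν` is the
measure on `p×d` matrices with iid standard Gaussian entries, `y ∈ ℝ^d` is
nonzero and `z(R) = (1/√p) (R y)`, then for `0 < ε < 1`,
`ν {R | |‖z R‖² - ‖y‖²| > ε ‖y‖²} ≤ 2 exp (-(3ε² - 2ε³) p / 12)`. -/
theorem stmt13 (d p : ℕ) (hd : 0 < d) (hp : 0 < p)
    (y : EuclideanSpace ℝ (Fin d)) (hy : y ≠ 0)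
    (ε : ℝ) (hε0 : 0 < ε) (hε1 : ε < 1) :
    (Measure.pi fun _ : Fin p => Measure.pi fun _ : Fin d => gaussianReal 0 1)
        {R : Fin p → Fin d → ℝ |
          |‖(WithLp.equiv 2 (Fin p → ℝ)).symm
                ((1 / Real.sqrt p) •
                  ((Matrix.of R) *ᵥ (WithLp.equiv 2 (Fin d → ℝ)) y))‖ ^ 2
              - ‖y‖ ^ 2| > ε * ‖y‖ ^ 2}
      ≤ ENNReal.ofReal (2 * Real.exp (-(3 * ε ^ 2 - 2 * ε ^ 3) * p / 12)) :=
  stmt13_general d p hp y hy ε hε0 hε1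
end
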